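/- arXiv:1509.07346 — 2 statements merged into one kernel-verified Lean document; each statement's English description precedes it below -/
import Mathlib

section
/- For any x ⊆ [n], any two intervals in I(x) = {[i, pr_x(i)] : sg(x)_i = 1} are either disjoint or one contains the other; moreover every such interval is disjoint from *(x). -/
/-- `c_x(i,j) = |x ∩ [i,j]| - |[i,j] \ x|`. -/
def cfun (x : Finset ℕ) (i j : ℕ) : ℤ :=
  ((Finset.Icc i j ∩ x).card : ℤ) - ((Finset.Icc i j \ x).card : ℤ)

/-- `sg(x)_i = *`: position `i` has no pair in the signature construction. -/
def SgStar (n : ℕ) (x : Finset ℕ) (i : ℕ) : Prop :=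
  (i ∈ x ∧ ¬∃ j, i < j ∧ j ≤ n ∧ cfun x i j = 0) ∨
  (i ∉ x ∧ ¬∃ j, 1 ≤ j ∧ j < i ∧ cfun x j i = 0)

/-!
Read `x` as a lattice path that steps up at the elements of `x` and down elsewhere, with height
`h k` after the first `k` steps, so that `c_x(i,j) = h (j+1) - h i`. For `i ∈ x`, `pr_x(i)` is the
first return of the path to the level `h i`, and strictly in between the path stays above that
level. Two such excursions are therefore disjoint or nested, and every position inside an
excursion has a partner inside it (an earlier visit of the level it steps down to, or a later
return to the level it steps up from), by the discrete intermediate value theorem.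
-/

lemma exists_eq_of_mem_uIcc_of_abs_step_le_one {f : ℕ → ℤ} (hf : ∀ k, |f (k + 1) - f k| ≤ 1)
    {a b : ℕ} {v : ℤ} (hab : a ≤ b) (hv : v ∈ Set.uIcc (f a) (f b)) :
    ∃ k, a ≤ k ∧ k ≤ b ∧ f k = v := by
  induction b, hab using Nat.le_induction with
  | base => exact ⟨a, le_rfl, le_rfl, by simpa [eq_comm] using hv⟩
  | succ b hab ih =>
    by_cases hvb : v ∈ Set.uIcc (f a) (f b)
    · obtain ⟨k, hak, hkb, hk⟩ := ih hvb
      exact ⟨k, hak, by omega, hk⟩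
    · have := abs_le.mp (hf b)
      simp only [Set.mem_uIcc] at hv hvb
      exact ⟨b + 1, by omega, le_rfl, by omega⟩

def height (x : Finset ℕ) (k : ℕ) : ℤ :=
  ∑ t ∈ Finset.range k, if t ∈ x then 1 else -1

lemma height_succ_of_mem {x : Finset ℕ} {k : ℕ} (hk : k ∈ x) :
    height x (k + 1) = height x k + 1 := by
  simp [height, Finset.sum_range_succ, hk]

lemma height_succ_of_notMem {x : Finset ℕ} {k : ℕ} (hk : k ∉ x) :
    height x (k + 1) = height x k - 1 := by
  simp [height, Finset.sum_range_succ, hk, sub_eq_add_neg]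

lemma abs_height_succ_sub_le_one (x : Finset ℕ) (k : ℕ) :
    |height x (k + 1) - height x k| ≤ 1 := by
  by_cases hk : k ∈ x
  · simp [height_succ_of_mem hk]
  · simp [height_succ_of_notMem hk]

lemma cfun_eq_sum (x : Finset ℕ) (i j : ℕ) :
    cfun x i j = ∑ k ∈ Finset.Icc i j, if k ∈ x then 1 else -1 := by
  classical
  rw [Finset.sum_ite, Finset.sum_const, Finset.sum_const, Finset.filter_mem_eq_inter,
    ← Finset.sdiff_eq_filter, cfun]
  simp [sub_eq_add_neg]

lemma cfun_eq_height_sub (x : Finset ℕ) {i j : ℕ} (hij : i ≤ j + 1) :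
    cfun x i j = height x (j + 1) - height x i := by
  rw [cfun_eq_sum, ← Finset.Ico_add_one_right_eq_Icc, Finset.sum_Ico_eq_sub _ hij, height, height]

section FirstReturn

variable {n : ℕ} {x : Finset ℕ} {i j : ℕ}

lemma height_pr_succ (hpr : IsLeast {j | i < j ∧ j ≤ n ∧ cfun x i j = 0} j) :
    height x (j + 1) = height x i := by
  have h := hpr.1.2.2
  rw [cfun_eq_height_sub x (by have := hpr.1.1; omega)] at h
  omega

lemma height_lt_of_lt_of_le_pr (hi : i ∈ x)
    (hpr : IsLeast {j | i < j ∧ j ≤ n ∧ cfun x i j = 0} j) {k : ℕ} (hik : i < k) (hkj : k ≤ j) :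
    height x i < height x k := by
  by_contra! hk
  have hup := height_succ_of_mem hi
  obtain ⟨k', hik', hk'k, hk'⟩ := exists_eq_of_mem_uIcc_of_abs_step_le_one
    (abs_height_succ_sub_le_one x) (show i + 1 ≤ k by omega) (v := height x i)
    (Set.mem_uIcc.mpr (Or.inr ⟨hk, by omega⟩))
  have hk'i : i + 1 < k' := lt_of_le_of_ne hik' (by rintro rfl; omega)
  have hzero : cfun x i (k' - 1) = 0 := by
    rw [cfun_eq_height_sub x (by omega), Nat.sub_add_cancel (by omega), hk', sub_self]
  have := hpr.2 ⟨by omega, by have := hpr.1.2.1; omega, hzero⟩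
  omega

lemma height_le_of_le_of_le_pr (hi : i ∈ x)
    (hpr : IsLeast {j | i < j ∧ j ≤ n ∧ cfun x i j = 0} j) {k : ℕ} (hik : i ≤ k) (hkj : k ≤ j) :
    height x i ≤ height x k := by
  rcases hik.lt_or_eq with h | rfl
  · exact (height_lt_of_lt_of_le_pr hi hpr h hkj).le
  · exact le_rfl

end FirstReturn

lemma Icc_pr_disjoint_or_subset_of_le {n : ℕ} {x : Finset ℕ} {i₁ j₁ i₂ j₂ : ℕ}
    (h1 : i₁ ∈ x) (h2 : i₂ ∈ x)
    (hp1 : IsLeast {j | i₁ < j ∧ j ≤ n ∧ cfun x i₁ j = 0} j₁)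
    (hp2 : IsLeast {j | i₂ < j ∧ j ≤ n ∧ cfun x i₂ j = 0} j₂) (hle : i₁ ≤ i₂) :
    Disjoint (Finset.Icc i₁ j₁) (Finset.Icc i₂ j₂) ∨ Finset.Icc i₂ j₂ ⊆ Finset.Icc i₁ j₁ := by
  by_cases hd : j₁ < i₂
  · left
    refine Finset.disjoint_left.mpr fun m hm1 hm2 => ?_
    rw [Finset.mem_Icc] at hm1 hm2
    omega
  · right
    refine Finset.Icc_subset_Icc hle ?_
    rcases hle.lt_or_eq with hlt | rfl
    · by_contra! hj
      have h₁ := height_lt_of_lt_of_le_pr h1 hp1 hlt (not_lt.mp hd)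
      have h₂ := height_lt_of_lt_of_le_pr h2 hp2 (show i₂ < j₁ + 1 by omega) hj
      have := height_pr_succ hp1
      omega
    · exact (hp1.unique hp2).ge

lemma not_sgStar_of_mem_Icc_pr {n : ℕ} {x : Finset ℕ} (hx : x ⊆ Finset.Icc 1 n) {i j : ℕ}
    (hi : i ∈ x) (hpr : IsLeast {j | i < j ∧ j ≤ n ∧ cfun x i j = 0} j) {m : ℕ}
    (hm : m ∈ Finset.Icc i j) : ¬ SgStar n x m := by
  rw [Finset.mem_Icc] at hm
  have hstep := abs_height_succ_sub_le_one x
  have hret := height_pr_succ hpr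
  have hmi := height_le_of_le_of_le_pr hi hpr hm.1 hm.2
  rintro (⟨hmx, hno⟩ | ⟨hmx, hno⟩)
  · -- the path is above `height x m` at `m + 1` and back at `height x i ≤ height x m` at `j + 1`
    have hup := height_succ_of_mem hmx
    obtain ⟨k, hmk, hkj, hk⟩ := exists_eq_of_mem_uIcc_of_abs_step_le_one hstep
      (show m + 1 ≤ j + 1 by omega) (v := height x m)
      (Set.mem_uIcc.mpr (Or.inr ⟨by omega, by omega⟩))
    have hmk' : m + 1 < k := lt_of_le_of_ne hmk (by rintro rfl; omega)
    refine hno ⟨k - 1, by omega, by have := hpr.1.2.1; omega, ?_⟩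
    rw [cfun_eq_height_sub x (by omega), Nat.sub_add_cancel (by omega), hk, sub_self]
  · -- the path steps down to `height x m - 1 ≥ height x i`, a level it already visited after `i`
    have hmi' : i < m := lt_of_le_of_ne hm.1 (fun h => hmx (h ▸ hi))
    have hdown := height_succ_of_notMem hmx
    have hlt := height_lt_of_lt_of_le_pr hi hpr hmi' hm.2
    obtain ⟨k, hik, hkm, hk⟩ := exists_eq_of_mem_uIcc_of_abs_step_le_one hstep hm.1
      (v := height x (m + 1)) (Set.mem_uIcc.mpr (Or.inl ⟨by omega, by omega⟩))
    have hkm' : k < m := lt_of_le_of_ne hkm (by rintro rfl; omega)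
    have hi1 : 1 ≤ i := (Finset.mem_Icc.mp (hx hi)).1
    refine hno ⟨k, by omega, hkm', ?_⟩
    rw [cfun_eq_height_sub x (by omega), hk, sub_self]

/-- any two intervals `[i, pr_x(i)]` (for `sg(x)_i = 1`) are disjoint
or nested, and each such interval avoids the starred positions. -/
theorem stmt_10 (n : ℕ) (x : Finset ℕ) (hx : x ⊆ Finset.Icc 1 n)
    (i₁ j₁ i₂ j₂ : ℕ) (h1 : i₁ ∈ x) (h2 : i₂ ∈ x)
    (hp1 : IsLeast {j | i₁ < j ∧ j ≤ n ∧ cfun x i₁ j = 0} j₁)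
    (hp2 : IsLeast {j | i₂ < j ∧ j ≤ n ∧ cfun x i₂ j = 0} j₂) :
    (Disjoint (Finset.Icc i₁ j₁) (Finset.Icc i₂ j₂) ∨
      Finset.Icc i₁ j₁ ⊆ Finset.Icc i₂ j₂ ∨ Finset.Icc i₂ j₂ ⊆ Finset.Icc i₁ j₁) ∧
    ∀ m ∈ Finset.Icc i₁ j₁, ¬ SgStar n x m := by
  refine ⟨?_, fun m hm => not_sgStar_of_mem_Icc_pr hx h1 hp1 hm⟩
  rcases le_total i₁ i₂ with h | h
  · rcases Icc_pr_disjoint_or_subset_of_le h1 h2 hp1 hp2 h with hd | hs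
    · exact Or.inl hd
    · exact Or.inr (Or.inr hs)
  · rcases Icc_pr_disjoint_or_subset_of_le h2 h1 hp2 hp1 h with hd | hs
    · exact Or.inl hd.symm
    · exact Or.inr (Or.inl hs)
end

section
/- For x ⊆ [n], any two circular intervals in I'(x) = {[i, pr'_x(i)]_n : csg(x)_i = 1} are either disjoint or one is contained in the other, and each such interval is disjoint from *'(x) = {i : csg(x)_i = *}. -/
/-- The circular interval `[i,j]_n ⊆ {1,...,n}`. -/
def cIcc (n i j : ℕ) : Finset ℕ :=
  if i ≤ j then Finset.Icc i j else Finset.Icc i n ∪ Finset.Icc 1 j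

/-- `c'_x(i,j) = |[i,j]_n ∩ x| - |[i,j]_n \ x|`. -/
def ccfun (n : ℕ) (x : Finset ℕ) (i j : ℕ) : ℤ :=
  ((cIcc n i j ∩ x).card : ℤ) - ((cIcc n i j \ x).card : ℤ)

/-- `j = pr'_x(i)` for `i ∈ x`: `c'_x(i,j) = 0` and `|[i,j]_n|` is minimal. -/
def IsCPairIn (n : ℕ) (x : Finset ℕ) (i j : ℕ) : Prop :=
  j ∈ Finset.Icc 1 n ∧ ccfun n x i j = 0 ∧
    ∀ j' ∈ Finset.Icc 1 n, ccfun n x i j' = 0 → (cIcc n i j).card ≤ (cIcc n i j').card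

/-- `csg(x)_i = *`: position `i` has no circular pair. -/
def CStar (n : ℕ) (x : Finset ℕ) (i : ℕ) : Prop :=
  (i ∈ x ∧ ¬∃ j ∈ Finset.Icc 1 n, ccfun n x i j = 0) ∨
  (i ∉ x ∧ ¬∃ j ∈ Finset.Icc 1 n, ccfun n x j i = 0)

/-!
Read `x` around the circle as a `±1` walk (`+1` on elements of `x`). Then `c'_x(i, j)` is the
increment of the walk over `[i, j]_n`, and for `i ∈ x` the partner `pr'_x(i)` is where the walk
started at `i` first returns to level `0`, so that walk stays positive strictly inside `[i, j]_n`.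
If `i₂` lies inside `[i₁, j₁]_n`, the walk from `i₂` is negative at `j₁`, hence has returned to `0`
before: intervals cannot cross. For `m ∈ [i₁, j₁]_n` the walk from `i₁` stays `≥ 0` up to `j₁`,
where it is `0`, so a discrete intermediate value argument finds an interval of balance `0`
starting at `m` (if `m ∈ x`) or ending at `m` (if `m ∉ x`).
-/

open Finset

def cshift (n i t : ℕ) : ℕ := (i - 1 + t) % n + 1

def cdist (n i j : ℕ) : ℕ := (j + n - i) % n

def pmOne (x : Finset ℕ) (k : ℕ) : ℤ := if k ∈ x then 1 else -1

def walk (n : ℕ) (x : Finset ℕ) (i t : ℕ) : ℤ := ∑ s ∈ range t, pmOne x (cshift n i s)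

lemma exists_eq_of_sub_one_le {f : ℕ → ℤ} {a b : ℕ} {c : ℤ} (hab : a ≤ b)
    (hf : ∀ t, a ≤ t → t < b → f t - 1 ≤ f (t + 1)) (ha : c ≤ f a) (hb : f b ≤ c) :
    ∃ t, a ≤ t ∧ t ≤ b ∧ f t = c := by
  by_contra! h
  have above : ∀ t, a ≤ t → t ≤ b → c < f t := by
    intro t hat
    induction t, hat using Nat.le_induction with
    | base => exact fun _ => lt_of_le_of_ne ha (h a le_rfl hab).symm
    | succ t hat ih =>
      intro htb
      have := h (t + 1) (by omega) htb
      have := hf t hat (by omega)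
      have := ih (by omega)
      omega
  have := above b hab le_rfl
  omega

section Geometry

variable {n i j k l m : ℕ}

lemma cshift_mem (hn : 0 < n) (i t : ℕ) : cshift n i t ∈ Icc 1 n := by
  have := Nat.mod_lt (i - 1 + t) hn
  simp only [cshift, mem_Icc]
  omega

lemma cshift_cshift (n i s t : ℕ) : cshift n (cshift n i s) t = cshift n i (s + t) := by
  simp only [cshift, Nat.add_sub_cancel, Nat.mod_add_mod, Nat.add_assoc]

lemma cshift_eq (hi : i ∈ Icc 1 n) {t : ℕ} (ht : t < n) :
    cshift n i t = if i + t ≤ n then i + t else i + t - n := by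
  rw [mem_Icc] at hi
  unfold cshift
  split_ifs
  · rw [Nat.mod_eq_of_lt (by omega)]
    omega
  · rw [show i - 1 + t = i + t - 1 - n + n by omega, Nat.add_mod_right,
      Nat.mod_eq_of_lt (by omega)]
    omega

lemma cdist_eq (hi : i ∈ Icc 1 n) (hj : j ∈ Icc 1 n) :
    cdist n i j = if i ≤ j then j - i else j + n - i := by
  rw [mem_Icc] at hi hj
  unfold cdist
  split_ifs
  · rw [show j + n - i = j - i + n by omega, Nat.add_mod_right, Nat.mod_eq_of_lt (by omega)]
  · exact Nat.mod_eq_of_lt (by omega)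

lemma cdist_lt (hn : 0 < n) (i j : ℕ) : cdist n i j < n :=
  Nat.mod_lt _ hn

lemma cshift_zero (hi : i ∈ Icc 1 n) : cshift n i 0 = i := by
  have := mem_Icc.1 hi
  rw [cshift_eq hi (by omega), if_pos (by omega), Nat.add_zero]

lemma cshift_cdist (hi : i ∈ Icc 1 n) (hj : j ∈ Icc 1 n) : cshift n i (cdist n i j) = j := by
  have hn : 0 < n := by rw [mem_Icc] at hi; omega
  have hlt := cdist_lt hn i j
  rw [cshift_eq hi hlt, cdist_eq hi hj] at *
  rw [mem_Icc] at hi hj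
  split_ifs at * <;> omega

lemma cdist_cshift (hi : i ∈ Icc 1 n) {t : ℕ} (ht : t < n) : cdist n i (cshift n i t) = t := by
  have hn : 0 < n := by omega
  have hmem := cshift_mem hn i t
  rw [cdist_eq hi hmem, cshift_eq hi ht]
  rw [mem_Icc] at hi
  split_ifs <;> omega

lemma cshift_injOn (hi : i ∈ Icc 1 n) : Set.InjOn (cshift n i) (Set.Iio n) :=
  fun s hs t ht hst => by rw [← cdist_cshift hi hs, hst, cdist_cshift hi ht]

lemma eq_of_cdist_eq_zero (hi : i ∈ Icc 1 n) (hk : k ∈ Icc 1 n) (h : cdist n i k = 0) :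
    i = k := by
  rw [← cshift_cdist hi hk, h, cshift_zero hi]

lemma cdist_add_cdist (hi : i ∈ Icc 1 n) (hk : k ∈ Icc 1 n) (hm : m ∈ Icc 1 n) :
    cdist n i k + cdist n k m = cdist n i m ∨ cdist n i k + cdist n k m = cdist n i m + n := by
  rw [cdist_eq hi hk, cdist_eq hk hm, cdist_eq hi hm]
  rw [mem_Icc] at hi hk hm
  split_ifs <;> omega

lemma mem_cIcc (hi : i ∈ Icc 1 n) (hj : j ∈ Icc 1 n) :
    m ∈ cIcc n i j ↔ m ∈ Icc 1 n ∧ cdist n i m ≤ cdist n i j := by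
  unfold cIcc
  by_cases hm : m ∈ Icc 1 n
  · rw [cdist_eq hi hm, cdist_eq hi hj]
    rw [mem_Icc] at hi hj hm
    split_ifs <;> simp only [mem_union, mem_Icc] <;> omega
  · rw [mem_Icc] at hi hj hm
    split_ifs <;> simp only [mem_union, mem_Icc] <;> omega

lemma cIcc_eq_image (hi : i ∈ Icc 1 n) (hj : j ∈ Icc 1 n) :
    cIcc n i j = (range (cdist n i j + 1)).image (cshift n i) := by
  have hn : 0 < n := by rw [mem_Icc] at hi; omega
  have hlt := cdist_lt hn i j
  ext m
  rw [mem_cIcc hi hj, mem_image]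
  constructor
  · rintro ⟨hm, hle⟩
    exact ⟨cdist n i m, mem_range.2 (by omega), cshift_cdist hi hm⟩
  · rintro ⟨t, ht, rfl⟩
    rw [mem_range] at ht
    exact ⟨cshift_mem hn i t, by rw [cdist_cshift hi (by omega)]; omega⟩

lemma card_cIcc (hi : i ∈ Icc 1 n) (hj : j ∈ Icc 1 n) : #(cIcc n i j) = cdist n i j + 1 := by
  have hn : 0 < n := by rw [mem_Icc] at hi; omega
  have hlt := cdist_lt hn i j
  rw [cIcc_eq_image hi hj, card_image_of_injOn, card_range]
  exact (cshift_injOn hi).mono fun t ht => by simp only [coe_range, Set.mem_Iio] at ht ⊢; omega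

lemma cIcc_subset_cIcc (hi : i ∈ Icc 1 n) (hj : j ∈ Icc 1 n) (hk : k ∈ Icc 1 n)
    (hl : l ∈ Icc 1 n) (h : cdist n i k + cdist n k l ≤ cdist n i j) :
    cIcc n k l ⊆ cIcc n i j := by
  have hn : 0 < n := by rw [mem_Icc] at hi; omega
  intro m hm
  rw [mem_cIcc hk hl] at hm
  rw [mem_cIcc hi hj]
  have := cdist_add_cdist hi hk hm.1
  have := cdist_lt hn i j
  exact ⟨hm.1, by omega⟩

lemma cdist_le_or_cdist_le_of_mem_cIcc {i₁ j₁ i₂ j₂ : ℕ} (hi₁ : i₁ ∈ Icc 1 n)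
    (hj₁ : j₁ ∈ Icc 1 n) (hi₂ : i₂ ∈ Icc 1 n) (hj₂ : j₂ ∈ Icc 1 n)
    (hm₁ : m ∈ cIcc n i₁ j₁) (hm₂ : m ∈ cIcc n i₂ j₂) :
    cdist n i₁ i₂ ≤ cdist n i₁ j₁ ∨ cdist n i₂ i₁ ≤ cdist n i₂ j₂ := by
  have hn : 0 < n := by rw [mem_Icc] at hi₁; omega
  rw [mem_cIcc hi₁ hj₁] at hm₁
  rw [mem_cIcc hi₂ hj₂] at hm₂
  have := cdist_add_cdist hi₁ hi₂ hm₁.1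
  have := cdist_add_cdist hi₂ hi₁ hm₁.1
  have := cdist_lt hn i₁ i₂
  have := cdist_lt hn i₂ i₁
  omega

end Geometry

section Walk

variable {n : ℕ} {x : Finset ℕ} {i j : ℕ}

lemma sum_pmOne (A x : Finset ℕ) : ∑ a ∈ A, pmOne x a = (#(A ∩ x) : ℤ) - #(A \ x) := by
  simp only [pmOne]
  rw [sum_ite]
  simp [filter_mem_eq_inter, filter_not, sub_eq_add_neg]

lemma walk_zero (n : ℕ) (x : Finset ℕ) (i : ℕ) : walk n x i 0 = 0 := rfl

lemma walk_succ (n : ℕ) (x : Finset ℕ) (i t : ℕ) :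
    walk n x i (t + 1) = walk n x i t + pmOne x (cshift n i t) :=
  sum_range_succ _ _

lemma walk_succ_eq (n : ℕ) (x : Finset ℕ) (i t : ℕ) :
    walk n x i (t + 1) = walk n x i t + 1 ∨ walk n x i (t + 1) = walk n x i t - 1 := by
  rw [walk_succ, pmOne]
  split_ifs
  · exact Or.inl rfl
  · exact Or.inr (sub_eq_add_neg _ _).symm

lemma walk_add (n : ℕ) (x : Finset ℕ) (i s t : ℕ) :
    walk n x i (s + t) = walk n x i s + walk n x (cshift n i s) t := by
  induction t with
  | zero => simp [walk_zero]
  | succ t ih => rw [← Nat.add_assoc, walk_succ, ih, walk_succ, cshift_cshift, add_assoc]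

lemma walk_one (hi : i ∈ Icc 1 n) (hix : i ∈ x) : walk n x i 1 = 1 := by
  simp [walk, pmOne, cshift_zero hi, hix]

lemma ccfun_eq_walk (hi : i ∈ Icc 1 n) (hj : j ∈ Icc 1 n) :
    ccfun n x i j = walk n x i (cdist n i j + 1) := by
  have hn : 0 < n := by rw [mem_Icc] at hi; omega
  have hlt := cdist_lt hn i j
  rw [ccfun, ← sum_pmOne, cIcc_eq_image hi hj, sum_image, walk]
  exact (cshift_injOn hi).mono fun t ht => by simp only [coe_range, Set.mem_Iio] at ht ⊢; omega

lemma ccfun_cshift {s t : ℕ} (hst : s < t) (htn : t ≤ n) :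
    ccfun n x (cshift n i s) (cshift n i (t - 1)) = walk n x i t - walk n x i s := by
  have hn : 0 < n := by omega
  have hk := cshift_mem hn i s
  have hshift : cshift n i (t - 1) = cshift n (cshift n i s) (t - 1 - s) := by
    rw [cshift_cshift, Nat.add_sub_cancel' (by omega)]
  have hsplit : walk n x i t = walk n x i s + walk n x (cshift n i s) (t - 1 - s + 1) := by
    rw [← walk_add]
    congr 1
    omega
  rw [hshift, ccfun_eq_walk hk (cshift_mem hn _ _), cdist_cshift hk (by omega), hsplit]
  ring

end Walk

namespace IsCPairIn

variable {n : ℕ} {x : Finset ℕ} {i j : ℕ}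

lemma walk_eq_zero (hi : i ∈ Icc 1 n) (hp : IsCPairIn n x i j) :
    walk n x i (cdist n i j + 1) = 0 := by
  rw [← ccfun_eq_walk hi hp.1]
  exact hp.2.1

lemma le_of_walk_eq_zero (hi : i ∈ Icc 1 n) (hp : IsCPairIn n x i j) {t : ℕ} (ht : 1 ≤ t)
    (htn : t ≤ n) (hw : walk n x i t = 0) : cdist n i j + 1 ≤ t := by
  have hn : 0 < n := by omega
  have hmem := cshift_mem hn i (t - 1)
  have hzero := ccfun_cshift (x := x) (i := i) ht htn
  rw [cshift_zero hi, hw, walk_zero, sub_zero] at hzero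
  have hmin := hp.2.2 _ hmem hzero
  rw [card_cIcc hi hp.1, card_cIcc hi hmem, cdist_cshift hi (by omega)] at hmin
  omega

lemma walk_pos (hi : i ∈ Icc 1 n) (hix : i ∈ x) (hp : IsCPairIn n x i j) {t : ℕ} (ht : 1 ≤ t)
    (htj : t ≤ cdist n i j) : 0 < walk n x i t := by
  have hn : 0 < n := by rw [mem_Icc] at hi; omega
  have hlt := cdist_lt hn i j
  by_contra! hle
  obtain ⟨t', ht'1, ht't, hzero⟩ := exists_eq_of_sub_one_le ht
    (fun s _ _ => by rcases walk_succ_eq n x i s with h | h <;> omega)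
    (by rw [walk_one hi hix]; omega) hle
  have := hp.le_of_walk_eq_zero hi ht'1 (by omega) hzero
  omega

lemma walk_nonneg (hi : i ∈ Icc 1 n) (hix : i ∈ x) (hp : IsCPairIn n x i j) {t : ℕ}
    (ht : t ≤ cdist n i j + 1) : 0 ≤ walk n x i t := by
  rcases Nat.eq_zero_or_pos t with rfl | ht0
  · exact le_rfl
  rcases Nat.lt_or_ge t (cdist n i j + 1) with htj | htj
  · exact (hp.walk_pos hi hix ht0 (by omega)).le
  · rw [show t = cdist n i j + 1 by omega, hp.walk_eq_zero hi]

lemma cdist_add_cdist_le {i₂ j₂ : ℕ} (hi : i ∈ Icc 1 n) (hi₂ : i₂ ∈ Icc 1 n) (hix : i ∈ x)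
    (hi₂x : i₂ ∈ x) (hp : IsCPairIn n x i j) (hp₂ : IsCPairIn n x i₂ j₂)
    (h : cdist n i i₂ ≤ cdist n i j) : cdist n i i₂ + cdist n i₂ j₂ ≤ cdist n i j := by
  rcases Nat.eq_zero_or_pos (cdist n i i₂) with hd | hd
  · obtain rfl := eq_of_cdist_eq_zero hi hi₂ hd
    have hmin := hp₂.2.2 j hp.1 hp.2.1
    rw [card_cIcc hi hp₂.1, card_cIcc hi hp.1] at hmin
    omega
  · have hadd := walk_add n x i (cdist n i i₂) (cdist n i j - cdist n i i₂ + 1)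
    rw [show cdist n i i₂ + (cdist n i j - cdist n i i₂ + 1) = cdist n i j + 1 by omega,
      hp.walk_eq_zero hi, cshift_cdist hi hi₂] at hadd
    have := hp.walk_pos hi hix hd h
    by_contra! hlt
    have := hp₂.walk_nonneg hi₂ hi₂x (t := cdist n i j - cdist n i i₂ + 1) (by omega)
    omega

lemma exists_ccfun_eq_zero_of_mem {m : ℕ} (hi : i ∈ Icc 1 n) (hix : i ∈ x)
    (hp : IsCPairIn n x i j) (hm : m ∈ cIcc n i j) (hmx : m ∈ x) :
    ∃ j' ∈ Icc 1 n, ccfun n x m j' = 0 := by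
  have hn : 0 < n := by rw [mem_Icc] at hi; omega
  rw [mem_cIcc hi hp.1] at hm
  obtain ⟨hmI, ha⟩ := hm
  have hlt := cdist_lt hn i j
  have hstep : walk n x i (cdist n i m + 1) = walk n x i (cdist n i m) + 1 := by
    rw [walk_succ, cshift_cdist hi hmI, pmOne, if_pos hmx]
  obtain ⟨t, hat, htj, heq⟩ := exists_eq_of_sub_one_le (f := walk n x i)
    (c := walk n x i (cdist n i m)) (by omega : cdist n i m + 1 ≤ cdist n i j + 1)
    (fun s _ _ => by rcases walk_succ_eq n x i s with h | h <;> omega)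
    (by omega) (by rw [hp.walk_eq_zero hi]; exact hp.walk_nonneg hi hix (by omega))
  refine ⟨cshift n i (t - 1), cshift_mem hn i (t - 1), ?_⟩
  rw [← cshift_cdist hi hmI, ccfun_cshift (by omega) (by omega), heq, sub_self]

lemma exists_ccfun_eq_zero_of_notMem {m : ℕ} (hi : i ∈ Icc 1 n) (hix : i ∈ x)
    (hp : IsCPairIn n x i j) (hm : m ∈ cIcc n i j) (hmx : m ∉ x) :
    ∃ j' ∈ Icc 1 n, ccfun n x j' m = 0 := by
  have hn : 0 < n := by rw [mem_Icc] at hi; omega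
  rw [mem_cIcc hi hp.1] at hm
  obtain ⟨hmI, ha⟩ := hm
  have hlt := cdist_lt hn i m
  have hstep : walk n x i (cdist n i m + 1) = walk n x i (cdist n i m) - 1 := by
    rw [walk_succ, cshift_cdist hi hmI, pmOne, if_neg hmx, sub_eq_add_neg]
  have hnonneg := hp.walk_nonneg hi hix (t := cdist n i m + 1) (by omega)
  obtain ⟨t, -, htm, heq⟩ := exists_eq_of_sub_one_le (f := fun s => -walk n x i s)
    (c := -walk n x i (cdist n i m + 1)) (Nat.zero_le (cdist n i m))
    (fun s _ _ => by rcases walk_succ_eq n x i s with h | h <;> omega)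
    (by simp only [walk_zero]; omega) (by omega)
  refine ⟨cshift n i t, cshift_mem hn i t, ?_⟩
  rw [← cshift_cdist hi hmI, ← Nat.add_sub_cancel (cdist n i m) 1,
    ccfun_cshift (by omega) (by omega)]
  simp only [neg_inj] at heq
  rw [heq, sub_self]

lemma not_cStar {m : ℕ} (hi : i ∈ Icc 1 n) (hix : i ∈ x) (hp : IsCPairIn n x i j)
    (hm : m ∈ cIcc n i j) : ¬ CStar n x m := by
  rintro (⟨hmx, hnone⟩ | ⟨hmx, hnone⟩)
  · exact hnone (hp.exists_ccfun_eq_zero_of_mem hi hix hm hmx)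
  · exact hnone (hp.exists_ccfun_eq_zero_of_notMem hi hix hm hmx)

end IsCPairIn

theorem stmt_15_general (n : ℕ) (x : Finset ℕ)
    (i₁ j₁ i₂ j₂ : ℕ) (hi1 : i₁ ∈ Finset.Icc 1 n) (hi2 : i₂ ∈ Finset.Icc 1 n)
    (h1 : i₁ ∈ x) (h2 : i₂ ∈ x)
    (hp1 : IsCPairIn n x i₁ j₁) (hp2 : IsCPairIn n x i₂ j₂) :
    (Disjoint (cIcc n i₁ j₁) (cIcc n i₂ j₂) ∨
      cIcc n i₁ j₁ ⊆ cIcc n i₂ j₂ ∨ cIcc n i₂ j₂ ⊆ cIcc n i₁ j₁) ∧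
    ∀ m ∈ cIcc n i₁ j₁, ¬ CStar n x m := by
  refine ⟨?_, fun m hm => hp1.not_cStar hi1 h1 hm⟩
  by_cases hdisj : Disjoint (cIcc n i₁ j₁) (cIcc n i₂ j₂)
  · exact Or.inl hdisj
  obtain ⟨m, hm₁, hm₂⟩ := not_disjoint_iff.mp hdisj
  rcases cdist_le_or_cdist_le_of_mem_cIcc hi1 hp1.1 hi2 hp2.1 hm₁ hm₂ with h | h
  · exact Or.inr (Or.inr (cIcc_subset_cIcc hi1 hp1.1 hi2 hp2.1
      (hp1.cdist_add_cdist_le hi1 hi2 h1 h2 hp2 h)))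
  · exact Or.inr (Or.inl (cIcc_subset_cIcc hi2 hp2.1 hi1 hp1.1
      (hp2.cdist_add_cdist_le hi2 hi1 h2 h1 hp1 h)))

/-- any two circular intervals `[i, pr'_x(i)]_n` (for `csg(x)_i = 1`)
are disjoint or nested, and each avoids the circularly starred positions. -/
theorem stmt_15 (n : ℕ) (x : Finset ℕ) (hx : x ⊆ Finset.Icc 1 n)
    (i₁ j₁ i₂ j₂ : ℕ) (hi1 : i₁ ∈ Finset.Icc 1 n) (hi2 : i₂ ∈ Finset.Icc 1 n)
    (h1 : i₁ ∈ x) (h2 : i₂ ∈ x)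
    (hp1 : IsCPairIn n x i₁ j₁) (hp2 : IsCPairIn n x i₂ j₂) :
    (Disjoint (cIcc n i₁ j₁) (cIcc n i₂ j₂) ∨
      cIcc n i₁ j₁ ⊆ cIcc n i₂ j₂ ∨ cIcc n i₂ j₂ ⊆ cIcc n i₁ j₁) ∧
    ∀ m ∈ cIcc n i₁ j₁, ¬ CStar n x m :=
  stmt_15_general n x i₁ j₁ i₂ j₂ hi1 hi2 h1 h2 hp1 hp2
end
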